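/- Let A be a commutative ring, and let B and C be commutative A-algebras. Assume B is a Noetherian unique factorization domain, C is flat and finitely generated as an A-algebra, and for every field K that is an A-algebra, the tensor product K ⊗_A C is a unique factorization domain whose units are exactly the images of the nonzero elements of K. Then every irreducible element of B ⊗_A C is a prime element of B ⊗_A C. -/

import Mathlib

/-!
Let `K` be the fraction field of `B`. Flatness of `C` embeds `B ⊗[A] C` into the domain
`K ⊗[A] C`, which is the localization of `B ⊗[A] C` at the image `M` of `B ∖ {0}`. A prime `p` of
`B` stays prime in `B ⊗[A] C`, because the quotient by it is `(B ⧸ p) ⊗[A] C`, a domain for the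
same reason. Hence every element of `M` is a unit times a product of primes, and Nagata's argument
applies: an irreducible `x` is either associated to one of these primes or coprime to all of them;
in the second case `x ∣ s * a` with `s ∈ M` forces `x ∣ a`, so `x` stays irreducible in the UFD
`K ⊗[A] C`, is prime there, and its primality descends to `B ⊗[A] C`.
-/

open TensorProduct

universe u

section Divisibility

variable {α : Type*} [CommMonoidWithZero α] [IsCancelMulZero α]

theorem dvd_of_dvd_prod_mul {x a : α} {f : Multiset α}
    (hf : ∀ p ∈ f, Prime p ∧ ¬p ∣ x) (h : x ∣ f.prod * a) : x ∣ a := by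
  induction f using Multiset.induction_on with
  | empty => simpa using h
  | cons p f ih =>
    obtain ⟨hp, hpx⟩ := hf p (Multiset.mem_cons_self p f)
    refine ih (fun q hq => hf q (Multiset.mem_cons_of_mem hq)) ?_
    obtain ⟨w, hw⟩ := h
    rw [Multiset.prod_cons, mul_assoc] at hw
    obtain ⟨w', rfl⟩ := (hp.dvd_or_dvd ⟨_, hw.symm⟩).resolve_left hpx
    refine ⟨w', mul_left_cancel₀ hp.ne_zero ?_⟩
    rw [hw, mul_left_comm]

theorem Multiset.isPrimal_prod {f : Multiset α} (hf : ∀ p ∈ f, IsPrimal p) : IsPrimal f.prod := by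
  induction f using Multiset.induction_on with
  | empty => simpa using isUnit_one.isPrimal
  | cons p f ih =>
    rw [Multiset.prod_cons]
    exact (hf p (Multiset.mem_cons_self p f)).mul
      (ih fun q hq => hf q (Multiset.mem_cons_of_mem hq))

def Submonoid.FactorsIntoPrimes (M : Submonoid α) : Prop :=
  ∀ s ∈ M, ∃ f : Multiset α, (∀ p ∈ f, Prime p) ∧ Associated f.prod s

namespace Submonoid.FactorsIntoPrimes

variable {M : Submonoid α}

theorem ne_zero [Nontrivial α] (hM : M.FactorsIntoPrimes) {s : α} (hs : s ∈ M) : s ≠ 0 := by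
  obtain ⟨f, hf, hfs⟩ := hM s hs
  exact hfs.ne_zero_iff.mp (Multiset.prod_ne_zero fun h0 => (hf 0 h0).ne_zero rfl)

theorem isPrimal (hM : M.FactorsIntoPrimes) {s : α} (hs : s ∈ M) : IsPrimal s := by
  obtain ⟨f, hf, u, rfl⟩ := hM s hs
  exact (Multiset.isPrimal_prod fun p hp => (hf p hp).isPrimal).mul u.isUnit.isPrimal

theorem dvd_of_dvd_mul (hM : M.FactorsIntoPrimes) {x a s : α}
    (hxM : ∀ s ∈ M, ∀ p, Prime p → p ∣ s → ¬p ∣ x) (hs : s ∈ M) (h : x ∣ s * a) : x ∣ a := by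
  obtain ⟨f, hf, u, rfl⟩ := hM s hs
  have hfx : ∀ p ∈ f, Prime p ∧ ¬p ∣ x := fun p hp =>
    ⟨hf p hp, hxM _ hs p (hf p hp) ((Multiset.dvd_prod hp).trans (dvd_mul_right _ _))⟩
  rw [mul_assoc] at h
  exact Units.dvd_mul_left.mp (dvd_of_dvd_prod_mul hfx h)

end Submonoid.FactorsIntoPrimes

end Divisibility

theorem Algebra.factorsIntoPrimes_algebraMapSubmonoid {B R : Type*} [CommSemiring B] [IsDomain B]
    [UniqueFactorizationMonoid B] [CommSemiring R] [Algebra B R]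
    (h : ∀ p : B, Prime p → Prime (algebraMap B R p)) :
    (Algebra.algebraMapSubmonoid R (nonZeroDivisors B)).FactorsIntoPrimes := by
  rintro _ ⟨b, hb, rfl⟩
  obtain ⟨f, hf, hfb⟩ :=
    UniqueFactorizationMonoid.exists_prime_factors b (nonZeroDivisors.ne_zero hb)
  refine ⟨f.map (algebraMap B R), ?_, ?_⟩
  · simp only [Multiset.mem_map]
    rintro _ ⟨p, hp, rfl⟩
    exact h p (hf p hp)
  · rw [← map_multiset_prod]
    exact hfb.map _

namespace IsLocalization

variable {R L : Type*} [CommRing R] [CommRing L] [Algebra R L] {M : Submonoid R}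
  [IsLocalization M L]

theorem exists_mem_dvd_mul_of_algebraMap_dvd {x a : R}
    (h : algebraMap R L x ∣ algebraMap R L a) : ∃ s ∈ M, x ∣ s * a := by
  obtain ⟨z, hz⟩ := h
  obtain ⟨⟨r, t⟩, hrt⟩ := IsLocalization.surj M z
  obtain ⟨c, hc⟩ : ∃ c : M, (c : R) * (a * t) = c * (x * r) :=
    IsLocalization.exists_of_eq (S := L) (by rw [map_mul, map_mul, hz, mul_assoc, hrt])
  exact ⟨c * t, mul_mem c.2 t.2, c * r, by rw [mul_assoc, mul_comm _ a, hc]; ring⟩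

variable [IsDomain R]

theorem dvd_of_algebraMap_dvd (hM : M.FactorsIntoPrimes) {x a : R}
    (hxM : ∀ s ∈ M, ∀ p, Prime p → p ∣ s → ¬p ∣ x)
    (h : algebraMap R L x ∣ algebraMap R L a) : x ∣ a := by
  obtain ⟨s, hs, hsa⟩ := exists_mem_dvd_mul_of_algebraMap_dvd (M := M) h
  exact hM.dvd_of_dvd_mul hxM hs hsa

theorem not_isUnit_algebraMap (hM : M.FactorsIntoPrimes) {x : R} (hx : ¬IsUnit x)
    (hxM : ∀ s ∈ M, ∀ p, Prime p → p ∣ s → ¬p ∣ x) : ¬IsUnit (algebraMap R L x) := by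
  rw [isUnit_iff_dvd_one, ← map_one (algebraMap R L)]
  exact fun h => hx (isUnit_iff_dvd_one.mpr (dvd_of_algebraMap_dvd hM hxM h))

theorem irreducible_algebraMap (hM : M.FactorsIntoPrimes) {x : R} (hx : Irreducible x)
    (hxM : ∀ s ∈ M, ∀ p, Prime p → p ∣ s → ¬p ∣ x) : Irreducible (algebraMap R L x) := by
  refine ⟨not_isUnit_algebraMap hM hx.not_isUnit hxM, fun Y Z hYZ => ?_⟩
  obtain ⟨⟨y, s⟩, hy⟩ := surj M Y
  obtain ⟨⟨z, t⟩, hz⟩ := surj M Z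
  obtain ⟨c, hc⟩ : ∃ c : M, (c : R) * ((s * t) * x) = c * (y * z) :=
    exists_of_eq (S := L) (by simp only [map_mul, ← hy, ← hz, hYZ]; ring)
  have hst : (s * t : R) ∈ M := mul_mem s.2 t.2
  have hxyz : s * t * x = y * z := mul_left_cancel₀ (hM.ne_zero c.2) hc
  obtain ⟨u₁, u₂, ⟨y₁, rfl⟩, ⟨z₁, rfl⟩, hu⟩ := hM.isPrimal hst ⟨x, hxyz.symm⟩
  have hx' : x = y₁ * z₁ := by
    refine mul_left_cancel₀ (hM.ne_zero hst) ?_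
    rw [hxyz, hu]
    ring
  have hunit : ∀ {u : R}, u ∣ s * t → IsUnit (algebraMap R L u) := fun h =>
    isUnit_of_dvd_unit (map_dvd _ h) (map_units L ⟨_, hst⟩)
  rcases hx.isUnit_or_isUnit hx' with h | h
  · refine .inl (isUnit_of_mul_isUnit_left (y := algebraMap R L s) ?_)
    rw [hy, map_mul]
    exact (hunit (hu ▸ dvd_mul_right _ _)).mul (h.map _)
  · refine .inr (isUnit_of_mul_isUnit_left (y := algebraMap R L t) ?_)
    rw [hz, map_mul]
    exact (hunit (hu ▸ dvd_mul_left _ _)).mul (h.map _)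

theorem prime_of_prime_algebraMap (hM : M.FactorsIntoPrimes) {x : R} (hx0 : x ≠ 0)
    (hx : ¬IsUnit x) (hxM : ∀ s ∈ M, ∀ p, Prime p → p ∣ s → ¬p ∣ x)
    (h : Prime (algebraMap R L x)) : Prime x := by
  refine ⟨hx0, hx, fun a b hab => ?_⟩
  have := map_dvd (algebraMap R L) hab
  rw [map_mul] at this
  exact (h.dvd_or_dvd this).imp (dvd_of_algebraMap_dvd hM hxM) (dvd_of_algebraMap_dvd hM hxM)

end IsLocalization

/-- Nagata's criterion, for a single irreducible element. -/
theorem Irreducible.prime_of_isLocalization {R : Type*} (L : Type*) [CommRing R] [IsDomain R]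
    [CommRing L] [IsDomain L] [UniqueFactorizationMonoid L] [Algebra R L] {M : Submonoid R}
    [IsLocalization M L] (hM : M.FactorsIntoPrimes) {x : R} (hx : Irreducible x) : Prime x := by
  by_cases hxM : ∀ s ∈ M, ∀ p, Prime p → p ∣ s → ¬p ∣ x
  · exact IsLocalization.prime_of_prime_algebraMap (L := L) hM hx.ne_zero hx.not_isUnit hxM
      (UniqueFactorizationMonoid.irreducible_iff_prime.mp
        (IsLocalization.irreducible_algebraMap hM hx hxM))
  · push Not at hxM
    obtain ⟨-, -, p, hp, -, hpx⟩ := hxM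
    exact (hp.irreducible.associated_of_dvd hx hpx).prime hp

section TensorProduct

variable {A C : Type u} [CommRing A] [CommRing C] [Algebra A C]

theorem Algebra.TensorProduct.map_id_injective_of_flat [Module.Flat A C] {B K : Type*}
    [CommRing B] [CommRing K] [Algebra A B] [Algebra A K] (f : B →ₐ[A] K)
    (hf : Function.Injective f) :
    Function.Injective (Algebra.TensorProduct.map f (AlgHom.id A C)) :=
  Module.Flat.rTensor_preserves_injective_linearMap (M := C) f.toLinearMap hf

theorem isDomain_tensorProduct [Module.Flat A C]
    (hdom : ∀ (K : Type u) [Field K] [Algebra A K], IsDomain (K ⊗[A] C))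
    (B : Type u) [CommRing B] [IsDomain B] [Algebra A B] : IsDomain (B ⊗[A] C) :=
  have := hdom (FractionRing B)
  Function.Injective.isDomain
    (Algebra.TensorProduct.map (IsScalarTower.toAlgHom A B (FractionRing B))
      (AlgHom.id A C)).toRingHom
    (Algebra.TensorProduct.map_id_injective_of_flat _
      (IsFractionRing.injective B (FractionRing B)))

theorem algebraMap_tensorProduct_ne_zero
    (hdom : ∀ (K : Type u) [Field K] [Algebra A K], IsDomain (K ⊗[A] C))
    {B : Type u} [CommRing B] [IsDomain B] [Algebra A B] {b : B} (hb : b ≠ 0) :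
    algebraMap B (B ⊗[A] C) b ≠ 0 := by
  let K := FractionRing B
  have := hdom K
  intro h
  have h' :=
    congrArg (Algebra.TensorProduct.map (IsScalarTower.toAlgHom A B K) (AlgHom.id A C)) h
  refine hb (IsFractionRing.injective B K ((algebraMap K (K ⊗[A] C)).injective ?_))
  simpa [Algebra.TensorProduct.algebraMap_apply] using h'

theorem prime_algebraMap_tensorProduct [Module.Flat A C]
    (hdom : ∀ (K : Type u) [Field K] [Algebra A K], IsDomain (K ⊗[A] C))
    {B : Type u} [CommRing B] [IsDomain B] [Algebra A B] {p : B} (hp : Prime p) :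
    Prime (algebraMap B (B ⊗[A] C) p) := by
  let I : Ideal B := Ideal.span {p}
  have : I.IsPrime := (Ideal.span_singleton_prime hp.ne_zero).mpr hp
  have := isDomain_tensorProduct hdom (B ⧸ I)
  have hker : RingHom.ker (Algebra.TensorProduct.map (Ideal.Quotient.mkₐ A I) (AlgHom.id A C)) =
      Ideal.span {algebraMap B (B ⊗[A] C) p} := by
    rw [Algebra.TensorProduct.rTensor_ker _ (Ideal.Quotient.mkₐ_surjective A I),
      ← RingHom.ker_coe_toRingHom, Ideal.Quotient.mkₐ_ker A I, Ideal.map_span,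
      Set.image_singleton]
    rfl
  rw [← Ideal.span_singleton_prime (algebraMap_tensorProduct_ne_zero hdom hp.ne_zero), ← hker]
  exact RingHom.ker_isPrime _

end TensorProduct

theorem irreducible_is_prime_tensor_general (A B C : Type u) [CommRing A] [CommRing B] [CommRing C]
    [Algebra A B] [Algebra A C]
    [IsDomain B] [UniqueFactorizationMonoid B]
    [Module.Flat A C]
    (hdom : ∀ (K : Type u) [Field K] [Algebra A K], IsDomain (K ⊗[A] C))
    (hufd : ∀ (K : Type u) [Field K] [Algebra A K] [IsDomain (K ⊗[A] C)],
      UniqueFactorizationMonoid (K ⊗[A] C))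
    (x : B ⊗[A] C) (hx : Irreducible x) :
    Prime x := by
  let K := FractionRing B
  have := hdom K
  have := hufd K
  have := isDomain_tensorProduct hdom B
  let : Algebra (B ⊗[A] C) (K ⊗[A] C) :=
    (Algebra.TensorProduct.map (IsScalarTower.toAlgHom A B K) (AlgHom.id A C)).toAlgebra
  have : IsScalarTower B (B ⊗[A] C) (K ⊗[A] C) :=
    .of_algebraMap_eq fun b => by simp [RingHom.algebraMap_toAlgebra]
  have := IsLocalization.tensorProduct_tensorProduct A C (nonZeroDivisors B) K
    (by ext; simp [RingHom.algebraMap_toAlgebra])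
  exact hx.prime_of_isLocalization (K ⊗[A] C)
    (Algebra.factorsIntoPrimes_algebraMapSubmonoid fun _ => prime_algebraMap_tensorProduct hdom)

/-- Under the hypotheses of the UFD tensor product proposition, every irreducible element of
`B ⊗[A] C` is prime. -/
theorem irreducible_is_prime_tensor (A B C : Type u) [CommRing A] [CommRing B] [CommRing C]
    [Algebra A B] [Algebra A C]
    [IsNoetherianRing B] [IsDomain B] [UniqueFactorizationMonoid B]
    [Module.Flat A C] [Algebra.FiniteType A C]
    (hdom : ∀ (K : Type u) [Field K] [Algebra A K], IsDomain (K ⊗[A] C))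
    (hufd : ∀ (K : Type u) [Field K] [Algebra A K] [IsDomain (K ⊗[A] C)],
      UniqueFactorizationMonoid (K ⊗[A] C))
    (hunits : ∀ (K : Type u) [Field K] [Algebra A K] (z : K ⊗[A] C),
      IsUnit z ↔ ∃ c : K, c ≠ 0 ∧ algebraMap K (K ⊗[A] C) c = z)
    (x : B ⊗[A] C) (hx : Irreducible x) :
    Prime x :=
  irreducible_is_prime_tensor_general A B C hdom hufd x hx
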